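/- Let K be an N×N Hermitian matrix and Φ an N×k matrix with linearly independent columns. Let P = Φ(Φ*Φ)^{-1}Φ* be the orthogonal projection onto the range of Φ and P⊥ = I − P. Suppose a ∈ C^N satisfies P⊥a = a and there exists c ∈ C^k with Ka + Φc = y and Φ*a = 0. If ϑ := min{⟨P⊥KP⊥x, x⟩ : ‖P⊥x‖ = 1} > 0, then ‖a‖₂ ≤ ϑ^{-1}‖y‖₂. -/

import Mathlib

open Matrix

noncomputable def evNorm {N : ℕ} (v : Fin N → ℂ) : ℝ :=
  Real.sqrt (∑ i, ‖v i‖ ^ 2)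

/-!
Since `Φᴴ a = 0`, both `P` and `Pᴴ` kill `a`, so `a` is fixed by `P⊥` and by its adjoint. Hence
`⟨P⊥ K P⊥ a, a⟩ = ⟨K a, a⟩ = ⟨y - Φ c, a⟩ = ⟨y, a⟩`. The lower bound `ϑ` on the unit sphere of
`range P⊥` extends by homogeneity to `ϑ ‖a‖² ≤ Re ⟨y, a⟩ ≤ ‖a‖ ‖y‖`.
-/

section evNorm

variable {N : ℕ}

lemma evNorm_eq_norm_toLp (v : Fin N → ℂ) : evNorm v = ‖WithLp.toLp 2 v‖ :=
  (EuclideanSpace.norm_eq _).symm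

lemma evNorm_nonneg (v : Fin N → ℂ) : 0 ≤ evNorm v :=
  Real.sqrt_nonneg _

lemma evNorm_eq_zero {v : Fin N → ℂ} : evNorm v = 0 ↔ v = 0 := by
  rw [evNorm_eq_norm_toLp, norm_eq_zero, WithLp.toLp_eq_zero]

lemma evNorm_real_smul (r : ℝ) (v : Fin N → ℂ) : evNorm ((r : ℂ) • v) = |r| * evNorm v := by
  rw [evNorm_eq_norm_toLp, evNorm_eq_norm_toLp, WithLp.toLp_smul, norm_smul, Complex.norm_real,
    Real.norm_eq_abs]

lemma re_star_dotProduct_le (u v : Fin N → ℂ) : (star u ⬝ᵥ v).re ≤ evNorm u * evNorm v := by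
  have h : star u ⬝ᵥ v = inner ℂ (WithLp.toLp 2 u) (WithLp.toLp 2 v) := by
    rw [EuclideanSpace.inner_toLp_toLp, dotProduct_comm]
  calc (star u ⬝ᵥ v).re ≤ ‖star u ⬝ᵥ v‖ := Complex.re_le_norm _
    _ ≤ evNorm u * evNorm v := by
      rw [h, evNorm_eq_norm_toLp, evNorm_eq_norm_toLp]
      exact norm_inner_le_norm _ _

end evNorm

section conjTranspose

variable {m n α : Type*} [Fintype n] [CommSemiring α] [StarRing α]

lemma star_dotProduct_mulVec [Fintype m] (A : Matrix m n α) (u : m → α) (v : n → α) :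
    star u ⬝ᵥ A *ᵥ v = star (Aᴴ *ᵥ u) ⬝ᵥ v := by
  rw [dotProduct_mulVec, star_mulVec, conjTranspose_conjTranspose]

lemma mul_mul_conjTranspose_mulVec_eq_zero [Fintype m] (Φ : Matrix m n α) (M : Matrix n n α)
    {a : m → α} (ha : Φᴴ *ᵥ a = 0) : (Φ * M * Φᴴ) *ᵥ a = 0 := by
  rw [← mulVec_mulVec, ha, mulVec_zero]

lemma conjTranspose_mul_mul_conjTranspose (Φ : Matrix m n α) (M : Matrix n n α) :
    (Φ * M * Φᴴ)ᴴ = Φ * Mᴴ * Φᴴ := by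
  rw [conjTranspose_mul, conjTranspose_mul, conjTranspose_conjTranspose, Matrix.mul_assoc]

end conjTranspose

lemma mul_evNorm_sq_le_of_forall_evNorm_eq_one {N : ℕ} {Q M : Matrix (Fin N) (Fin N) ℂ} {ϑ : ℝ}
    (hϑ : ∀ x, Q *ᵥ x = x → evNorm x = 1 → ϑ ≤ (star x ⬝ᵥ M *ᵥ x).re)
    {x : Fin N → ℂ} (hx : Q *ᵥ x = x) : ϑ * evNorm x ^ 2 ≤ (star x ⬝ᵥ M *ᵥ x).re := by
  rcases eq_or_ne x 0 with rfl | hx0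
  · simp [evNorm_eq_zero.mpr rfl]
  have ht : 0 < evNorm x := (evNorm_nonneg x).lt_of_ne' (evNorm_eq_zero.not.mpr hx0)
  have hunit : evNorm ((((evNorm x)⁻¹ : ℝ) : ℂ) • x) = 1 := by
    rw [evNorm_real_smul, abs_of_pos (inv_pos.mpr ht), inv_mul_cancel₀ ht.ne']
  have hscale : ∀ s : ℝ,
      (star ((s : ℂ) • x) ⬝ᵥ M *ᵥ ((s : ℂ) • x)).re = s ^ 2 * (star x ⬝ᵥ M *ᵥ x).re := by
    intro s
    simp only [star_smul, Complex.star_def, Complex.conj_ofReal, mulVec_smul, smul_dotProduct,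
      dotProduct_smul, smul_eq_mul, Complex.re_ofReal_mul]
    ring
  have h := hϑ _ (by rw [mulVec_smul, hx]) hunit
  rw [hscale] at h
  calc ϑ * evNorm x ^ 2 ≤ (evNorm x)⁻¹ ^ 2 * (star x ⬝ᵥ M *ᵥ x).re * evNorm x ^ 2 := by gcongr
    _ = (star x ⬝ᵥ M *ᵥ x).re := by field_simp

theorem stmt0_general {N k : ℕ} (K : Matrix (Fin N) (Fin N) ℂ)
    (Φ : Matrix (Fin N) (Fin k) ℂ)
    (P : Matrix (Fin N) (Fin N) ℂ)
    (hP : P = Φ * (Φᴴ * Φ)⁻¹ * Φᴴ)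
    (Pperp : Matrix (Fin N) (Fin N) ℂ) (hPperp : Pperp = 1 - P)
    (a y : Fin N → ℂ) (c : Fin k → ℂ)
    (hsys : K *ᵥ a + Φ *ᵥ c = y)
    (hconstr : Φᴴ *ᵥ a = 0)
    (ϑ : ℝ) (hϑpos : 0 < ϑ)
    (hϑ : ∀ x : Fin N → ℂ, evNorm (Pperp *ᵥ x) = 1 →
      ϑ ≤ (star x ⬝ᵥ (Pperp *ᵥ (K *ᵥ (Pperp *ᵥ x)))).re) :
    evNorm a ≤ ϑ⁻¹ * evNorm y := by
  have hPa : P *ᵥ a = 0 := hP ▸ mul_mul_conjTranspose_mulVec_eq_zero _ _ hconstr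
  have hPHa : Pᴴ *ᵥ a = 0 := by
    rw [hP, conjTranspose_mul_mul_conjTranspose]
    exact mul_mul_conjTranspose_mulVec_eq_zero _ _ hconstr
  have hfix : Pperp *ᵥ a = a := by rw [hPperp, sub_mulVec, one_mulVec, hPa, sub_zero]
  have hfixH : Pperpᴴ *ᵥ a = a := by
    rw [hPperp, conjTranspose_sub, conjTranspose_one, sub_mulVec, one_mulVec, hPHa, sub_zero]
  have hcoer : ∀ x, Pperp *ᵥ x = x → evNorm x = 1 → ϑ ≤ (star x ⬝ᵥ (Pperp * K) *ᵥ x).re := by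
    intro x hx hx1
    simpa only [hx, mulVec_mulVec] using hϑ x (by rwa [hx])
  have hform : star a ⬝ᵥ (Pperp * K) *ᵥ a = star a ⬝ᵥ y := by
    rw [← mulVec_mulVec, star_dotProduct_mulVec, hfixH, ← hsys, dotProduct_add,
      star_dotProduct_mulVec Φ, hconstr, star_zero, zero_dotProduct, add_zero]
  have hbound : ϑ * evNorm a ^ 2 ≤ evNorm a * evNorm y :=
    (hform ▸ mul_evNorm_sq_le_of_forall_evNorm_eq_one hcoer hfix).trans (re_star_dotProduct_le a y)
  rw [le_inv_mul_iff₀ hϑpos]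
  rcases (evNorm_nonneg a).eq_or_lt with ha0 | ha0
  · rw [← ha0, mul_zero]; exact evNorm_nonneg y
  · nlinarith

/-- stability bound on the kernel coefficients `a`. -/
theorem stmt0 {N k : ℕ} (K : Matrix (Fin N) (Fin N) ℂ) (hK : K.IsHermitian)
    (Φ : Matrix (Fin N) (Fin k) ℂ)
    (hΦ : LinearIndependent ℂ (fun j => fun i => Φ i j))
    (P : Matrix (Fin N) (Fin N) ℂ)
    (hP : P = Φ * (Φᴴ * Φ)⁻¹ * Φᴴ)
    (Pperp : Matrix (Fin N) (Fin N) ℂ) (hPperp : Pperp = 1 - P)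
    (a y : Fin N → ℂ) (c : Fin k → ℂ)
    (ha : Pperp *ᵥ a = a)
    (hsys : K *ᵥ a + Φ *ᵥ c = y)
    (hconstr : Φᴴ *ᵥ a = 0)
    (ϑ : ℝ) (hϑpos : 0 < ϑ)
    (hϑ : ∀ x : Fin N → ℂ, evNorm (Pperp *ᵥ x) = 1 →
      ϑ ≤ (star x ⬝ᵥ (Pperp *ᵥ (K *ᵥ (Pperp *ᵥ x)))).re) :
    evNorm a ≤ ϑ⁻¹ * evNorm y :=
  stmt0_general K Φ P hP Pperp hPperp a y c hsys hconstr ϑ hϑpos hϑ
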